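/- arXiv:2202.02846 — 6 statements merged into one kernel-verified Lean document; each statement's English description precedes it below -/
import Mathlib

section
/- For all real k with k ∈ (1/2, 2/3) ∪ (2/3, 3/4) ∪ (4/3, 3/2), the quantity k^4 + 112 k^3 - 354 k^2 + 112 k + 1 is negative. -/
theorem stmt_4 (k : ℝ)
    (hk : k ∈ Set.Ioo (1/2 : ℝ) (2/3) ∪ Set.Ioo (2/3 : ℝ) (3/4) ∪ Set.Ioo (4/3 : ℝ) (3/2)) :
    k ^ 4 + 112 * k ^ 3 - 354 * k ^ 2 + 112 * k + 1 < 0 := by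
  rcases hk with (⟨h1, h2⟩ | ⟨h1, h2⟩) | ⟨h1, h2⟩ <;> nlinarith [sq_nonneg k, sq_nonneg (k-1), sq_nonneg (k*k-1), mul_pos (sub_pos.2 h1) (sub_pos.2 h2)]
end

section
/- The polynomial q1(x) = 2x^6 - 153x^5 + 894x^4 - 1625x^3 + 1234x^2 - 444x + 48 has exactly one root in the open interval (0, 1/5). -/
/-! `q1 0 = 48 > 0 > q1 (1/5)`, so a root exists by the intermediate value theorem; it is unique
because `q1' < 0` on `(0, 1/5)`. -/

open Set

theorem existsUnique_zero_of_strictAntiOn {f : ℝ → ℝ} {a b : ℝ} (hab : a ≤ b)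
    (hcont : ContinuousOn f (Icc a b)) (hanti : StrictAntiOn f (Icc a b))
    (hb : f b < 0) (ha : 0 < f a) :
    ∃! x, x ∈ Ioo a b ∧ f x = 0 := by
  obtain ⟨x, hx, hfx⟩ := intermediate_value_Ioo' hab hcont ⟨hb, ha⟩
  refine ⟨x, ⟨hx, hfx⟩, fun y ⟨hy, hfy⟩ => ?_⟩
  exact hanti.injOn (Ioo_subset_Icc_self hy) (Ioo_subset_Icc_self hx) (hfy.trans hfx.symm)

noncomputable def q1 (x : ℝ) : ℝ :=
  2 * x ^ 6 - 153 * x ^ 5 + 894 * x ^ 4 - 1625 * x ^ 3 + 1234 * x ^ 2 - 444 * x + 48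

theorem hasDerivAt_q1 (x : ℝ) :
    HasDerivAt q1 (12 * x ^ 5 - 765 * x ^ 4 + 3576 * x ^ 3 - 4875 * x ^ 2 + 2468 * x - 444) x := by
  have h := ((((((hasDerivAt_pow 6 x).const_mul (2 : ℝ)).sub
      ((hasDerivAt_pow 5 x).const_mul 153)).add
      ((hasDerivAt_pow 4 x).const_mul 894)).sub
      ((hasDerivAt_pow 3 x).const_mul 1625)).add
      ((hasDerivAt_pow 2 x).const_mul 1234)).sub ((hasDerivAt_id x).const_mul 444)
  refine (h.add_const 48).congr_deriv ?_
  push_cast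
  ring

theorem continuous_q1 : Continuous q1 := by
  unfold q1
  fun_prop

theorem q1_deriv_neg {x : ℝ} (h0 : 0 < x) (h1 : x < 1 / 5) :
    12 * x ^ 5 - 765 * x ^ 4 + 3576 * x ^ 3 - 4875 * x ^ 2 + 2468 * x - 444 < 0 := by
  have h1' : 0 ≤ 1 / 5 - x := by linarith
  nlinarith [pow_pos h0 5, mul_nonneg (pow_pos h0 3).le h1',
    mul_nonneg (mul_nonneg (pow_pos h0 2).le h1') h1', mul_nonneg h0.le h1']

theorem strictAntiOn_q1 : StrictAntiOn q1 (Icc 0 (1 / 5)) := by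
  refine strictAntiOn_of_deriv_neg (convex_Icc _ _) continuous_q1.continuousOn fun x hx => ?_
  rw [interior_Icc] at hx
  rw [(hasDerivAt_q1 x).deriv]
  exact q1_deriv_neg hx.1 hx.2

theorem stmt_6 :
    ∃! x : ℝ, x ∈ Set.Ioo (0 : ℝ) (1/5) ∧
      2 * x ^ 6 - 153 * x ^ 5 + 894 * x ^ 4 - 1625 * x ^ 3 + 1234 * x ^ 2 - 444 * x + 48 = 0 :=
  existsUnique_zero_of_strictAntiOn (by norm_num) continuous_q1.continuousOn strictAntiOn_q1
    (by norm_num [q1]) (by norm_num [q1])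
end

section
/- For k > 0 with k ≠ 1, the three-element Wronskian W(x + x^{2k-1}, (x + x^{2k-1}) arctan(x^{k-1}), x^k)(x) equals -4(k-1)^3 x^{4k-2} / (x^2 + x^{2k}) for x > 0, and in particular is nonvanishing on (0, ∞). -/
/-! The weight `f = x + x^(2k-1)` is chosen so that `f * (arctan x^(k-1))' = (k-1) x^(k-1)` is a
monomial. Hence the middle column of the Wronskian is `arctan x^(k-1)` times the first column plus
a column of powers of `x`; the `arctan` part cancels and what remains is a rational function of
`x` and `x^k`. -/

open Real

open Filter Topology

theorem det_iterate_deriv_fin_three (f g h : ℝ → ℝ) (x : ℝ) :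
    Matrix.det (fun i j : Fin 3 => deriv^[i.val] (![f, g, h] j) x) =
      f x * (deriv g x * deriv (deriv h) x - deriv h x * deriv (deriv g) x)
        - g x * (deriv f x * deriv (deriv h) x - deriv h x * deriv (deriv f) x)
        + h x * (deriv f x * deriv (deriv g) x - deriv g x * deriv (deriv f) x) := by
  refine (Matrix.det_fin_three _).trans ?_
  simp only [Fin.isValue, Fin.coe_ofNat_eq_mod, Nat.zero_mod, Nat.one_mod,
    Nat.mod_succ, Matrix.cons_val_zero, Matrix.cons_val_one, Matrix.cons_val,
    Function.iterate_zero, Function.iterate_succ, Function.comp_apply, id_eq]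
  ring

theorem deriv_deriv_eq_of_eventually_hasDerivAt {f f' : ℝ → ℝ} {x f'' : ℝ}
    (hf : ∀ᶠ y in 𝓝 x, HasDerivAt f (f' y) y) (hf' : HasDerivAt f' f'' x) :
    deriv (deriv f) x = f'' := by
  have hderiv : deriv f =ᶠ[𝓝 x] f' := hf.mono fun _ hy => hy.deriv
  rw [hderiv.deriv_eq, hf'.deriv]

section

variable {x : ℝ}

theorem hasDerivAt_add_rpow_const (p : ℝ) (hx : x ≠ 0) :
    HasDerivAt (fun y => y + y ^ p) (1 + p * x ^ (p - 1)) x :=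
  (hasDerivAt_id x).add (hasDerivAt_rpow_const (Or.inl hx))

theorem hasDerivAt_one_add_mul_rpow_const (p : ℝ) (hx : x ≠ 0) :
    HasDerivAt (fun y => 1 + p * y ^ (p - 1)) (p * ((p - 1) * x ^ (p - 1 - 1))) x :=
  ((hasDerivAt_rpow_const (Or.inl hx)).const_mul p).const_add 1

theorem hasDerivAt_arctan_rpow_const (p : ℝ) (hx : x ≠ 0) :
    HasDerivAt (fun y => arctan (y ^ p)) (1 / (1 + (x ^ p) ^ 2) * (p * x ^ (p - 1))) x :=
  (hasDerivAt_rpow_const (Or.inl hx)).arctan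

theorem deriv_deriv_add_rpow_const (p : ℝ) (hx : x ≠ 0) :
    deriv (deriv fun y => y + y ^ p) x = p * ((p - 1) * x ^ (p - 1 - 1)) :=
  deriv_deriv_eq_of_eventually_hasDerivAt
    (eventually_of_mem (isOpen_ne.mem_nhds hx) fun _ hy => hasDerivAt_add_rpow_const p hy)
    (hasDerivAt_one_add_mul_rpow_const p hx)

theorem deriv_deriv_rpow_const (p : ℝ) :
    deriv (deriv fun y => y ^ p) x = p * ((p - 1) * x ^ (p - 1 - 1)) := by
  simp only [deriv_rpow_const', deriv_const_mul_field', Real.deriv_rpow_const]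

variable (k : ℝ)

theorem add_rpow_mul_deriv_arctan_rpow (hx : 0 < x) :
    (x + x ^ (2 * k - 1)) * (1 / (1 + (x ^ (k - 1)) ^ 2) * ((k - 1) * x ^ (k - 1 - 1)))
      = (k - 1) * x ^ (k - 1) := by
  have hsq : x ^ (2 * k - 1) = x * (x ^ (k - 1)) ^ 2 := by
    rw [show 2 * k - 1 = 1 + (k - 1) * 2 by ring, rpow_add hx, rpow_one, rpow_mul hx.le,
      rpow_two]
  rw [hsq, rpow_sub_one hx.ne' (k - 1)]
  have : 0 < 1 + (x ^ (k - 1)) ^ 2 := by positivity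
  field_simp

theorem hasDerivAt_add_rpow_mul_arctan_rpow (hx : 0 < x) :
    HasDerivAt (fun y => (y + y ^ (2 * k - 1)) * arctan (y ^ (k - 1)))
      ((1 + (2 * k - 1) * x ^ (2 * k - 1 - 1)) * arctan (x ^ (k - 1))
        + (k - 1) * x ^ (k - 1)) x := by
  have h := (hasDerivAt_add_rpow_const (2 * k - 1) hx.ne').mul
    (hasDerivAt_arctan_rpow_const (k - 1) hx.ne')
  rwa [add_rpow_mul_deriv_arctan_rpow k hx] at h

theorem deriv_deriv_add_rpow_mul_arctan_rpow (hx : 0 < x) :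
    deriv (deriv fun y => (y + y ^ (2 * k - 1)) * arctan (y ^ (k - 1))) x
      = (2 * k - 1) * ((2 * k - 1 - 1) * x ^ (2 * k - 1 - 1 - 1)) * arctan (x ^ (k - 1))
        + (1 + (2 * k - 1) * x ^ (2 * k - 1 - 1))
          * (1 / (1 + (x ^ (k - 1)) ^ 2) * ((k - 1) * x ^ (k - 1 - 1)))
        + (k - 1) * ((k - 1) * x ^ (k - 1 - 1)) :=
  deriv_deriv_eq_of_eventually_hasDerivAt
    (eventually_of_mem (Ioi_mem_nhds hx) fun _ hy => hasDerivAt_add_rpow_mul_arctan_rpow k hy)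
    (((hasDerivAt_one_add_mul_rpow_const _ hx.ne').mul
      (hasDerivAt_arctan_rpow_const _ hx.ne')).add
      ((hasDerivAt_rpow_const (Or.inl hx.ne')).const_mul _))

end

theorem stmt_10_general (k : ℝ) (hk1 : k ≠ 1) (x : ℝ) (hx : 0 < x) :
    Matrix.det (fun i j : Fin 3 =>
        deriv^[i.val]
          (![fun y : ℝ => y + y ^ (2 * k - 1),
             fun y : ℝ => (y + y ^ (2 * k - 1)) * arctan (y ^ (k - 1)),
             fun y : ℝ => y ^ k] j) x)
      = -4 * (k - 1) ^ 3 * x ^ (4 * k - 2) / (x ^ (2 : ℝ) + x ^ (2 * k)) ∧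
    -4 * (k - 1) ^ 3 * x ^ (4 * k - 2) / (x ^ (2 : ℝ) + x ^ (2 * k)) ≠ 0 := by
  refine ⟨?_, by have := sub_ne_zero.mpr hk1; positivity⟩
  rw [det_iterate_deriv_fin_three, (hasDerivAt_add_rpow_const _ hx.ne').deriv,
    (hasDerivAt_add_rpow_mul_arctan_rpow k hx).deriv, Real.deriv_rpow_const,
    deriv_deriv_add_rpow_const _ hx.ne', deriv_deriv_add_rpow_mul_arctan_rpow k hx,
    deriv_deriv_rpow_const]
  -- Express every power of `x` through `x` and `x ^ k`, so that `field_simp` clears denominators.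
  simp only [two_mul, show 4 * k = k + k + k + k by ring, rpow_two, rpow_add hx, rpow_sub hx,
    rpow_one]
  have hu : 0 < x ^ k := rpow_pos_of_pos hx k
  have hA : 0 < 1 + (x ^ k / x) ^ 2 := by positivity
  field_simp
  ring

theorem stmt_10 (k : ℝ) (hk : 0 < k) (hk1 : k ≠ 1) (x : ℝ) (hx : 0 < x) :
    Matrix.det (fun i j : Fin 3 =>
        deriv^[i.val]
          (![fun y : ℝ => y + y ^ (2 * k - 1),
             fun y : ℝ => (y + y ^ (2 * k - 1)) * arctan (y ^ (k - 1)),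
             fun y : ℝ => y ^ k] j) x)
      = -4 * (k - 1) ^ 3 * x ^ (4 * k - 2) / (x ^ (2 : ℝ) + x ^ (2 * k)) ∧
    -4 * (k - 1) ^ 3 * x ^ (4 * k - 2) / (x ^ (2 : ℝ) + x ^ (2 * k)) ≠ 0 :=
  stmt_10_general k hk1 x hx
end

section
/- For k ∈ (1, 2] ∪ [3, 5], the quadratic P(x) = (k-5)(k-2)k(3k-1) x^2 - 2(k(k(k(k+10)-30)+10)+1) x - (k-3)(2k-1)(5k-1) has no root in (0,∞); for k ∈ (2,3) ∪ (5,∞) it has exactly one simple root in (0,∞). -/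
set_option maxHeartbeats 800000

private lemma quad_exu (a b c : ℝ) (hac : a * c < 0) :
    ∃! x : ℝ, 0 < x ∧ a * x ^ 2 + b * x + c = 0 := by
  have ha : a ≠ 0 := by rintro rfl; simp at hac
  have hD : b ^ 2 < b ^ 2 - 4 * a * c := by nlinarith
  set s := Real.sqrt (b ^ 2 - 4 * a * c) with hs
  have hs0 : 0 ≤ s := Real.sqrt_nonneg _
  have hs2 : s ^ 2 = b ^ 2 - 4 * a * c := Real.sq_sqrt (by nlinarith [sq_nonneg b])
  have hsb : |b| < s := by
    nlinarith [abs_nonneg b, sq_abs b]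
  have hbs1 : -b < s := by
    have := neg_abs_le b; linarith
  have hbs2 : b < s := by
    have := le_abs_self b; linarith
  have key : ∀ x y : ℝ, 0 < x → 0 < y →
      a * x ^ 2 + b * x + c = 0 → a * y ^ 2 + b * y + c = 0 → x = y := by
    intro x y hx hy hfx hfy
    by_contra hne
    have h1 : (x - y) * (a * (x + y) + b) = 0 := by linear_combination hfx - hfy
    have h2 : a * (x + y) + b = 0 := by
      rcases mul_eq_zero.1 h1 with h | h
      · exact absurd (sub_eq_zero.1 h) hne
      · exact h
    have hc : c = a * (x * y) := by linear_combination hfx - x * h2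
    have hac2 : a * c = a ^ 2 * (x * y) := by rw [hc]; ring
    nlinarith [mul_pos hx hy, sq_nonneg a]
  have h2a : (2 * a) ≠ 0 := by simpa using ha
  rcases lt_or_gt_of_ne ha with haneg | hapos
  · refine ⟨(-b - s) / (2 * a), ⟨?_, ?_⟩, ?_⟩
    · apply div_pos_iff.2; right
      constructor <;> nlinarith
    · field_simp
      ring_nf
      nlinarith [hs2]
    · rintro y ⟨hy, hfy⟩
      refine key y _ hy ?_ hfy ?_
      · apply div_pos_iff.2; right; constructor <;> nlinarith
      · field_simp; ring_nf; nlinarith [hs2]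
  · refine ⟨(-b + s) / (2 * a), ⟨?_, ?_⟩, ?_⟩
    · apply div_pos <;> nlinarith
    · field_simp
      ring_nf
      nlinarith [hs2]
    · rintro y ⟨hy, hfy⟩
      refine key y _ hy ?_ hfy ?_
      · apply div_pos <;> nlinarith
      · field_simp; ring_nf; nlinarith [hs2]

theorem stmt_12 (k : ℝ) :
    (k ∈ Set.Ioc (1 : ℝ) 2 ∪ Set.Icc (3 : ℝ) 5 →
      ∀ x : ℝ, 0 < x →
        (k - 5) * (k - 2) * k * (3 * k - 1) * x ^ 2
          - 2 * (k * (k * (k * (k + 10) - 30) + 10) + 1) * x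
          - (k - 3) * (2 * k - 1) * (5 * k - 1) ≠ 0) ∧
    (k ∈ Set.Ioo (2 : ℝ) 3 ∪ Set.Ioi (5 : ℝ) →
      (∃! x : ℝ, 0 < x ∧
        (k - 5) * (k - 2) * k * (3 * k - 1) * x ^ 2
          - 2 * (k * (k * (k * (k + 10) - 30) + 10) + 1) * x
          - (k - 3) * (2 * k - 1) * (5 * k - 1) = 0) ∧
      ∀ x : ℝ, 0 < x →
        (k - 5) * (k - 2) * k * (3 * k - 1) * x ^ 2
          - 2 * (k * (k * (k * (k + 10) - 30) + 10) + 1) * x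
          - (k - 3) * (2 * k - 1) * (5 * k - 1) = 0 →
        deriv (fun y : ℝ => (k - 5) * (k - 2) * k * (3 * k - 1) * y ^ 2
          - 2 * (k * (k * (k * (k + 10) - 30) + 10) + 1) * y
          - (k - 3) * (2 * k - 1) * (5 * k - 1)) x ≠ 0) := by
  set A := (k - 5) * (k - 2) * k * (3 * k - 1) with hA
  set B := -(2 * (k * (k * (k * (k + 10) - 30) + 10) + 1)) with hB
  set C := -((k - 3) * (2 * k - 1) * (5 * k - 1)) with hC
  constructor
  · rintro (⟨hk1, hk2⟩ | ⟨hk1, hk2⟩) x hx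
    · -- k ∈ (1,2] : P(x) > 0
      have hk0 : (0:ℝ) < k := by linarith
      have h3k : (0:ℝ) < 3 * k - 1 := by linarith
      have hA0 : 0 ≤ A := by
        have h : A = ((5 - k) * (2 - k)) * (k * (3 * k - 1)) := by rw [hA]; ring
        rw [h]
        exact mul_nonneg (mul_nonneg (by linarith) (by linarith)) (mul_pos hk0 h3k).le
      have hS : k * (k * (k * (k + 10) - 30) + 10) + 1 < 0 := by
        nlinarith [sq_nonneg (k-1), sq_nonneg (2-k),
          mul_nonneg (mul_nonneg (by linarith : (0:ℝ) ≤ k-1) (by linarith : (0:ℝ) ≤ 2-k)) (by linarith : (0:ℝ) ≤ k-1),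
          mul_nonneg (mul_nonneg (by linarith : (0:ℝ) ≤ k-1) (by linarith : (0:ℝ) ≤ 2-k)) (by linarith : (0:ℝ) ≤ 2-k),
          mul_nonneg (mul_nonneg (mul_nonneg (by linarith : (0:ℝ) ≤ k-1) (by linarith : (0:ℝ) ≤ 2-k)) (by linarith : (0:ℝ) ≤ k-1)) (by linarith : (0:ℝ) ≤ 2-k)]
      have hc : 0 < C := by
        have h : C = (3 - k) * ((2 * k - 1) * (5 * k - 1)) := by rw [hC]; ring
        rw [h]
        exact mul_pos (by linarith) (mul_pos (by linarith) (by linarith))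
      intro h
      rw [hC] at hc
      nlinarith [mul_nonneg hA0 (sq_nonneg x),
        mul_pos (by linarith : (0:ℝ) < -(k * (k * (k * (k + 10) - 30) + 10) + 1)) hx]
    · -- k ∈ [3,5] : P(x) < 0
      have hk0 : (0:ℝ) < k := by linarith
      have h3k : (0:ℝ) < 3 * k - 1 := by linarith
      have hA0 : A ≤ 0 := by
        have h : A = -(((5 - k) * (k - 2)) * (k * (3 * k - 1))) := by rw [hA]; ring
        rw [h]
        simp only [neg_nonpos]
        exact mul_nonneg (mul_nonneg (by linarith) (by linarith)) (mul_pos hk0 h3k).le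
      have hS : 0 < k * (k * (k * (k + 10) - 30) + 10) + 1 := by
        nlinarith [mul_nonneg (by linarith : (0:ℝ) ≤ k - 3) hk0.le,
          mul_nonneg (mul_nonneg (by linarith : (0:ℝ) ≤ k - 3) hk0.le) hk0.le,
          mul_nonneg (mul_nonneg (mul_nonneg (by linarith : (0:ℝ) ≤ k - 3) hk0.le) hk0.le) hk0.le,
          sq_nonneg k]
      have hc : C ≤ 0 := by
        have h : C = -((k - 3) * ((2 * k - 1) * (5 * k - 1))) := by rw [hC]; ring
        rw [h]
        simp only [neg_nonpos]
        exact mul_nonneg (by linarith) (mul_pos (by linarith : (0:ℝ) < 2*k-1) (by linarith : (0:ℝ) < 5*k-1)).le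
      intro h
      rw [hC] at hc
      nlinarith [mul_nonpos_of_nonpos_of_nonneg hA0 (sq_nonneg x), mul_pos hS hx]
  · intro hk
    have hac : A * C < 0 := by
      rcases hk with ⟨hk1, hk2⟩ | hk1
      · have h1 : A < 0 := by
          have h : A = -(((5 - k) * (k - 2)) * (k * (3 * k - 1))) := by rw [hA]; ring
          rw [h]
          simp only [neg_neg, neg_lt, neg_zero]
          exact mul_pos (mul_pos (by linarith) (by linarith)) (mul_pos (by linarith) (by linarith))
        have h2 : 0 < C := by
          have h : C = (3 - k) * ((2 * k - 1) * (5 * k - 1)) := by rw [hC]; ring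
          rw [h]
          exact mul_pos (by linarith) (mul_pos (by linarith) (by linarith))
        exact mul_neg_of_neg_of_pos h1 h2
      · simp only [Set.mem_Ioi] at hk1
        have h1 : 0 < A := by
          rw [hA]
          exact mul_pos (mul_pos (mul_pos (by linarith) (by linarith)) (by linarith)) (by linarith)
        have h2 : C < 0 := by
          have h : C = -((k - 3) * ((2 * k - 1) * (5 * k - 1))) := by rw [hC]; ring
          rw [h]
          simp only [neg_neg, neg_lt, neg_zero, Left.neg_neg_iff]
          exact mul_pos (by linarith) (mul_pos (by linarith) (by linarith))
        exact mul_neg_of_pos_of_neg h1 h2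
    constructor
    · obtain ⟨x, ⟨hx, hfx⟩, huniq⟩ := quad_exu A B C hac
      refine ⟨x, ⟨hx, by rw [hB, hC] at hfx; linarith [hfx]⟩, ?_⟩
      rintro y ⟨hy, hfy⟩
      exact huniq y ⟨hy, by rw [hB, hC]; linarith [hfy]⟩
    · intro x hx hfx
      have hderiv : deriv (fun y : ℝ => (k - 5) * (k - 2) * k * (3 * k - 1) * y ^ 2
          - 2 * (k * (k * (k * (k + 10) - 30) + 10) + 1) * y
          - (k - 3) * (2 * k - 1) * (5 * k - 1)) x
          = 2 * A * x + B := by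
        have h : HasDerivAt (fun y : ℝ => (k - 5) * (k - 2) * k * (3 * k - 1) * y ^ 2
            - 2 * (k * (k * (k * (k + 10) - 30) + 10) + 1) * y
            - (k - 3) * (2 * k - 1) * (5 * k - 1))
            ((k - 5) * (k - 2) * k * (3 * k - 1) * (2 * x ^ 1)
              - 2 * (k * (k * (k * (k + 10) - 30) + 10) + 1) * 1) x :=
          (((hasDerivAt_pow 2 x).const_mul _).sub
            ((hasDerivAt_id x).const_mul _)).sub_const _
        rw [h.deriv, hA, hB]; ring
      rw [hderiv]
      intro hd
      have hroot : A * x ^ 2 + B * x + C = 0 := by rw [hB, hC]; linarith [hfx]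
      have hCeq : C = A * x ^ 2 := by linear_combination hroot - x * hd
      have hACeq : A * C = (A * x) ^ 2 := by rw [hCeq]; ring
      nlinarith [sq_nonneg (A * x)]
end

section
/- Define A = (k-5)(k-2)^2 k (2k-1)(3k-4)(3k-1)(4k-3), B = -2(2k-1)(3k-4)(k(k(k(2k(k(39k-179)+235)-89)-118)+35)-2), C = (3k-4)(k(k(k(5k(k(2k(24k-61)+177)-366)+2034)-930)+201)-38), D = -2(3k-2)(5k-4)(k(k(k(k(2k-19)+88)-75)-38)+26), E = (k-3)(2k-3)(2k-1)(3k-2)(5k-4)(5k-1), and P(x) = A x^4 + B x^3 + C x^2 + D x + E. Then for k ∈ (4/5, 1) ∪ (1, 4/3), all of A, B, C, D, E are positive, and hence P(x) > 0 for all x ≥ 0. -/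
set_option maxHeartbeats 1000000 in
theorem stmt_15 (k : ℝ) (hk : k ∈ Set.Ioo (4/5 : ℝ) 1 ∪ Set.Ioo (1 : ℝ) (4/3))
    (A B C D E : ℝ)
    (hA : A = (k - 5) * (k - 2) ^ 2 * k * (2 * k - 1) * (3 * k - 4) * (3 * k - 1) * (4 * k - 3))
    (hB : B = -2 * (2 * k - 1) * (3 * k - 4) *
      (k * (k * (k * (2 * k * (k * (39 * k - 179) + 235) - 89) - 118) + 35) - 2))
    (hC : C = (3 * k - 4) *
      (k * (k * (k * (5 * k * (k * (2 * k * (24 * k - 61) + 177) - 366) + 2034) - 930) + 201) - 38))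
    (hD : D = -2 * (3 * k - 2) * (5 * k - 4) *
      (k * (k * (k * (k * (2 * k - 19) + 88) - 75) - 38) + 26))
    (hE : E = (k - 3) * (2 * k - 3) * (2 * k - 1) * (3 * k - 2) * (5 * k - 4) * (5 * k - 1)) :
    0 < A ∧ 0 < B ∧ 0 < C ∧ 0 < D ∧ 0 < E ∧
    ∀ x : ℝ, 0 ≤ x → 0 < A * x ^ 4 + B * x ^ 3 + C * x ^ 2 + D * x + E := by
  have h1 : 4/5 < k := by rcases hk with ⟨h,_⟩|⟨h,_⟩ <;> linarith
  have h2 : k < 4/3 := by rcases hk with ⟨_,h⟩|⟨_,h⟩ <;> linarith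
  have p : (0:ℝ) < (k - 4/5) * (4/3 - k) := mul_pos (by linarith) (by linarith)
  have f1 : (0:ℝ) < 5 - k := by linarith
  have f2 : (0:ℝ) < 2 - k := by linarith
  have f3 : (0:ℝ) < k := by linarith
  have f4 : (0:ℝ) < 2*k - 1 := by linarith
  have f5 : (0:ℝ) < 4 - 3*k := by linarith
  have f6 : (0:ℝ) < 3*k - 1 := by linarith
  have f7 : (0:ℝ) < 4*k - 3 := by linarith
  have f8 : (0:ℝ) < 3 - k := by linarith
  have f9 : (0:ℝ) < 3 - 2*k := by linarith
  have f10 : (0:ℝ) < 3*k - 2 := by linarith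
  have f11 : (0:ℝ) < 5*k - 4 := by linarith
  have f12 : (0:ℝ) < 5*k - 1 := by linarith
  have hA' : 0 < A := by
    have : A = (5-k)*((2-k)*(2-k))*k*(2*k-1)*(4-3*k)*(3*k-1)*(4*k-3) := by rw [hA]; ring
    rw [this]
    exact mul_pos (mul_pos (mul_pos (mul_pos (mul_pos (mul_pos f1 (mul_pos f2 f2)) f3) f4) f5) f6) f7
  have hB' : 0 < B := by
    have hQ : 0 < k * (k * (k * (2 * k * (k * (39 * k - 179) + 235) - 89) - 118) + 35) - 2 := by
      nlinarith [mul_pos p p, mul_pos (mul_pos p p) p, sq_nonneg (k-1), sq_nonneg k, mul_pos p (mul_pos p (mul_pos p p))]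
    have : B = 2 * (2*k-1) * (4-3*k) * (k * (k * (k * (2 * k * (k * (39 * k - 179) + 235) - 89) - 118) + 35) - 2) := by rw [hB]; ring
    rw [this]
    exact mul_pos (mul_pos (mul_pos two_pos f4) f5) hQ
  have hC' : 0 < C := by
    have hR : 0 < -(k * (k * (k * (5 * k * (k * (2 * k * (24 * k - 61) + 177) - 366) + 2034) - 930) + 201) - 38) := by
      nlinarith [mul_pos p p, mul_pos (mul_pos p p) p, sq_nonneg (k-1), sq_nonneg k, mul_pos p (mul_pos p (mul_pos p p))]
    have : C = (4-3*k) * (-(k * (k * (k * (5 * k * (k * (2 * k * (24 * k - 61) + 177) - 366) + 2034) - 930) + 201) - 38)) := by rw [hC]; ring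
    rw [this]
    exact mul_pos f5 hR
  have hD' : 0 < D := by
    have hS : 0 < -(k * (k * (k * (k * (2 * k - 19) + 88) - 75) - 38) + 26) := by
      nlinarith [mul_pos p p, sq_nonneg (k-1), mul_pos (mul_pos p p) p]
    have : D = 2 * (3*k-2) * (5*k-4) * (-(k * (k * (k * (k * (2 * k - 19) + 88) - 75) - 38) + 26)) := by rw [hD]; ring
    rw [this]
    exact mul_pos (mul_pos (mul_pos two_pos f10) f11) hS
  have hE' : 0 < E := by
    have : E = (3-k)*(3-2*k)*(2*k-1)*(3*k-2)*(5*k-4)*(5*k-1) := by rw [hE]; ring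
    rw [this]
    exact mul_pos (mul_pos (mul_pos (mul_pos (mul_pos f8 f9) f4) f10) f11) f12
  refine ⟨hA', hB', hC', hD', hE', fun x hx => ?_⟩
  positivity
end

section
/- With P(x) = A x^4 + B x^3 + C x^2 + D x + E as in the quartic with coefficients A = (k-5)(k-2)^2 k(2k-1)(3k-4)(3k-1)(4k-3), B = -2(2k-1)(3k-4)(k(k(k(2k(k(39k-179)+235)-89)-118)+35)-2), C = (3k-4)(k(k(k(5k(k(2k(24k-61)+177)-366)+2034)-930)+201)-38), D = -2(3k-2)(5k-4)(k(k(k(k(2k-19)+88)-75)-38)+26), E = (k-3)(2k-3)(2k-1)(3k-2)(5k-4)(5k-1): for k ∈ (2/3, 3/4), all of A, B, C, D, E are negative, and hence P(x) < 0 for all x ≥ 0; in particular P has no root in [0,∞). -/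
set_option maxHeartbeats 1600000 in
theorem stmt_16 (k : ℝ) (hk : k ∈ Set.Ioo (2/3 : ℝ) (3/4))
    (A B C D E : ℝ)
    (hA : A = (k - 5) * (k - 2) ^ 2 * k * (2 * k - 1) * (3 * k - 4) * (3 * k - 1) * (4 * k - 3))
    (hB : B = -2 * (2 * k - 1) * (3 * k - 4) *
      (k * (k * (k * (2 * k * (k * (39 * k - 179) + 235) - 89) - 118) + 35) - 2))
    (hC : C = (3 * k - 4) *
      (k * (k * (k * (5 * k * (k * (2 * k * (24 * k - 61) + 177) - 366) + 2034) - 930) + 201) - 38))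
    (hD : D = -2 * (3 * k - 2) * (5 * k - 4) *
      (k * (k * (k * (k * (2 * k - 19) + 88) - 75) - 38) + 26))
    (hE : E = (k - 3) * (2 * k - 3) * (2 * k - 1) * (3 * k - 2) * (5 * k - 4) * (5 * k - 1)) :
    A < 0 ∧ B < 0 ∧ C < 0 ∧ D < 0 ∧ E < 0 ∧
    (∀ x : ℝ, 0 ≤ x → A * x ^ 4 + B * x ^ 3 + C * x ^ 2 + D * x + E < 0) ∧
    ∀ x : ℝ, 0 ≤ x → A * x ^ 4 + B * x ^ 3 + C * x ^ 2 + D * x + E ≠ 0 := by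
  obtain ⟨h1, h2⟩ := hk
  have hk0 : (0:ℝ) < k := by linarith
  have hp1 : (0:ℝ) < 2 * k - 1 := by linarith
  have hp2 : (0:ℝ) < 4 - 3 * k := by linarith
  have hp3 : (0:ℝ) < 3 * k - 1 := by linarith
  have hp4 : (0:ℝ) < 3 - 4 * k := by linarith
  have hp5 : (0:ℝ) < 5 - k := by linarith
  have hp6 : (0:ℝ) < 3 - k := by linarith
  have hp7 : (0:ℝ) < 3 - 2 * k := by linarith
  have hp8 : (0:ℝ) < 3 * k - 2 := by linarith
  have hp9 : (0:ℝ) < 4 - 5 * k := by linarith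
  have hp10 : (0:ℝ) < 5 * k - 1 := by linarith
  have hp11 : (0:ℝ) < (k - 2) ^ 2 := by nlinarith [sq_nonneg (k - 2)]
  have hq : k * (k * (k * (2 * k * (k * (39 * k - 179) + 235) - 89) - 118) + 35) - 2 < 0 := by
    nlinarith [sq_nonneg k, sq_nonneg (k - 1), mul_pos hp1 hp2,
      mul_pos (mul_pos hp1 hp2) hp4, sq_nonneg (k*k - k), mul_pos hk0 hk0,
      mul_pos (mul_pos hk0 hk0) (mul_pos hk0 hk0)]
  have hc2 : 0 < k * (k * (k * (5 * k * (k * (2 * k * (24 * k - 61) + 177) - 366) + 2034) - 930) + 201) - 38 := by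
    nlinarith [mul_pos hp1 hp2, mul_pos (mul_pos hp1 hp2) hp4, sq_nonneg (k*k - k),
      mul_pos hk0 hk0, mul_pos (mul_pos hk0 hk0) (mul_pos hk0 hk0),
      mul_pos (mul_pos (mul_pos hp1 hp2) hp4) hk0, sq_nonneg (k - 7/10)]
  have hd2 : k * (k * (k * (k * (2 * k - 19) + 88) - 75) - 38) + 26 < 0 := by
    nlinarith [mul_pos hk0 hk0, mul_pos (mul_pos hk0 hk0) (mul_pos hk0 hk0),
      sq_nonneg (k*k - k), mul_pos hp1 hp2]
  have HA : A < 0 := by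
    have : A = -((5 - k) * (k - 2) ^ 2 * k * (2 * k - 1) * (4 - 3 * k) * (3 * k - 1) * (3 - 4 * k)) := by
      rw [hA]; ring
    rw [this]
    exact neg_lt_zero.mpr (mul_pos (mul_pos (mul_pos (mul_pos (mul_pos (mul_pos hp5 hp11) hk0) hp1) hp2) hp3) hp4)
  have HB : B < 0 := by
    have : B = -(2 * (2 * k - 1) * (4 - 3 * k) *
        (2 - (k * (k * (k * (2 * k * (k * (39 * k - 179) + 235) - 89) - 118) + 35)))) := by
      rw [hB]; ring
    rw [this]
    have h2q : (0:ℝ) < 2 - (k * (k * (k * (2 * k * (k * (39 * k - 179) + 235) - 89) - 118) + 35)) := by linarith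
    exact neg_lt_zero.mpr (mul_pos (mul_pos (mul_pos two_pos hp1) hp2) h2q)
  have HC : C < 0 := by
    have : C = -((4 - 3 * k) *
        (k * (k * (k * (5 * k * (k * (2 * k * (24 * k - 61) + 177) - 366) + 2034) - 930) + 201) - 38)) := by
      rw [hC]; ring
    rw [this]
    exact neg_lt_zero.mpr (mul_pos hp2 hc2)
  have HD : D < 0 := by
    have : D = -(2 * (3 * k - 2) * (4 - 5 * k) *
        (-(k * (k * (k * (k * (2 * k - 19) + 88) - 75) - 38) + 26))) := by
      rw [hD]; ring
    rw [this]
    have hd2' : (0:ℝ) < -(k * (k * (k * (k * (2 * k - 19) + 88) - 75) - 38) + 26) := by linarith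
    exact neg_lt_zero.mpr (mul_pos (mul_pos (mul_pos two_pos hp8) hp9) hd2')
  have HE : E < 0 := by
    have : E = -((3 - k) * (3 - 2 * k) * (2 * k - 1) * (3 * k - 2) * (4 - 5 * k) * (5 * k - 1)) := by
      rw [hE]; ring
    rw [this]
    exact neg_lt_zero.mpr (mul_pos (mul_pos (mul_pos (mul_pos (mul_pos hp6 hp7) hp1) hp8) hp9) hp10)
  have key : ∀ x : ℝ, 0 ≤ x → A * x ^ 4 + B * x ^ 3 + C * x ^ 2 + D * x + E < 0 := by
    intro x hx
    have t4 : A * x ^ 4 ≤ 0 := mul_nonpos_of_nonpos_of_nonneg HA.le (by positivity)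
    have t3 : B * x ^ 3 ≤ 0 := mul_nonpos_of_nonpos_of_nonneg HB.le (by positivity)
    have t2 : C * x ^ 2 ≤ 0 := mul_nonpos_of_nonpos_of_nonneg HC.le (by positivity)
    have t1 : D * x ≤ 0 := mul_nonpos_of_nonpos_of_nonneg HD.le hx
    linarith only [t4, t3, t2, t1, HE]
  exact ⟨HA, HB, HC, HD, HE, key, fun x hx => (key x hx).ne⟩
end
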